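/- arXiv:1704.04732 — 3 statements merged into one kernel-verified Lean document; each statement's English description precedes it below -/
import Mathlib

section
/- Under the GEM(α,θ) sampling construction, for every n ≥ 1: P[ X_j ≠ 1 for all j ∈ {1,…,n} ] = (α+θ)_n / (1+θ)_n. Equivalently, min{m ≥ 1 : X_m = 1} exceeds n with probability (α+θ)_n/(1+θ)_n. -/
open MeasureTheory ProbabilityTheory Finset

noncomputable section

/-- Stick-breaking frequencies: `stickP H i = H i * ∏_{1 ≤ j < i} (1 - H j)` (for `i ≥ 1`). -/
def stickP (H : ℕ → ℝ) (i : ℕ) : ℝ := H i * ∏ j ∈ Finset.Ico 1 i, (1 - H j)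

/-- `sampleX H u = min {i ≥ 1 : u < P 1 + ⋯ + P i}` where `P = stickP H`. -/
def sampleX (H : ℕ → ℝ) (u : ℝ) : ℕ :=
  sInf {i : ℕ | 1 ≤ i ∧ u < ∑ m ∈ Finset.Icc 1 i, stickP H m}

/-- The value-ordered cluster sizes of the sample `X 1, …, X n`: the list whose `i`-th entry is
the number of indices `j ∈ {1,…,n}` with `X j` equal to the `i`-th smallest distinct value
among `X 1, …, X n`. -/
def valueOrdered (n : ℕ) (X : ℕ → ℕ) : List ℕ :=
  (((Finset.Icc 1 n).image X).sort (· ≤ ·)).map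
    fun v => ((Finset.Icc 1 n).filter fun j => X j = v).card

/-- The GEM(α,θ) sampling construction: `H i` (for `i ≥ 1`) are independent with
Beta(1−α, θ+iα) distribution (density proportional to `x^(-α) * (1-x)^(θ+iα-1)` on `(0,1)`),
the `U j` are i.i.d. uniform on `(0,1)`, and the sequences `(H i)` and `(U j)` are independent. -/
def IsGEM {Ω : Type} [MeasurableSpace Ω] (μ : Measure Ω) (α θ : ℝ)
    (H U : ℕ → Ω → ℝ) : Prop :=
  (∀ i, Measurable (H i)) ∧ (∀ j, Measurable (U j)) ∧
  iIndepFun H μ ∧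
  iIndepFun U μ ∧
  IndepFun (fun ω i => H i ω) (fun ω j => U j ω) μ ∧
  (∀ i, 1 ≤ i → ∃ C : ℝ, 0 < C ∧
    μ.map (H i) = ((volume : Measure ℝ).restrict (Set.Ioo 0 1)).withDensity
      fun x => ENNReal.ofReal (C * x ^ (-α) * (1 - x) ^ (θ + (i : ℝ) * α - 1))) ∧
  (∀ j, μ.map (U j) = (volume : Measure ℝ).restrict (Set.Ioo 0 1))

/-!
Since `P 1 = H 1`, the sample `X j` equals `1` exactly when `U j < H 1`, so the event is
`{H 1 ≤ U j for all j ≤ n}`. As `H 1` is independent of the i.i.d. uniform `U j`, its probability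
is `E[(1 - H 1)^n]`, and for `H 1 ~ Beta(1 - α, θ + α)` this moment is
`B(1 - α, θ + α + n) / B(1 - α, θ + α) = (θ + α)_n / (1 + θ)_n` by `Γ(x + n) = Γ(x) (x)_n`.
-/

lemma Real.Gamma_add_nat_eq_mul_ascPochhammer {x : ℝ} (hx : 0 < x) (n : ℕ) :
    Real.Gamma (x + n) = Real.Gamma x * (ascPochhammer ℝ n).eval x := by
  induction n with
  | zero => simp
  | succ n ih =>
    rw [Nat.cast_succ, ← add_assoc, Real.Gamma_add_one (by positivity), ih,
      ascPochhammer_succ_eval]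
    ring

lemma beta_add_nat_mul_ascPochhammer {a b : ℝ} (ha : 0 < a) (hb : 0 < b) (n : ℕ) :
    beta a (b + n) * (ascPochhammer ℝ n).eval (a + b) = beta a b * (ascPochhammer ℝ n).eval b := by
  have hΓ : Real.Gamma (a + b) ≠ 0 := (Real.Gamma_pos_of_pos (add_pos ha hb)).ne'
  have hP : (ascPochhammer ℝ n).eval (a + b) ≠ 0 := (ascPochhammer_pos n _ (add_pos ha hb)).ne'
  rw [beta, beta, ← add_assoc, Real.Gamma_add_nat_eq_mul_ascPochhammer hb,
    Real.Gamma_add_nat_eq_mul_ascPochhammer (add_pos ha hb)]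
  field_simp

lemma lintegral_Ioo_rpow_mul_one_sub_rpow {a b : ℝ} (ha : 0 < a) (hb : 0 < b) :
    ∫⁻ x in Set.Ioo 0 1, ENNReal.ofReal (x ^ (a - 1) * (1 - x) ^ (b - 1))
      = ENNReal.ofReal (beta a b) := by
  have hβ := beta_pos ha hb
  have h := lintegral_betaPDF_eq_one ha hb
  simp_rw [lintegral_betaPDF, mul_assoc, ENNReal.ofReal_mul (one_div_pos.2 hβ).le] at h
  rw [lintegral_const_mul' _ _ ENNReal.ofReal_ne_top] at h
  rw [ENNReal.eq_inv_of_mul_eq_one_left ((mul_comm _ _).trans h), one_div,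
    ENNReal.ofReal_inv_of_pos hβ, inv_inv]

def scaledBetaMeasure (C a b : ℝ) : Measure ℝ :=
  (volume.restrict (Set.Ioo 0 1)).withDensity
    fun x => ENNReal.ofReal (C * x ^ (a - 1) * (1 - x) ^ (b - 1))

lemma volume_restrict_Ioo_Ici {x : ℝ} (hx : x ∈ Set.Ioo (0 : ℝ) 1) :
    volume.restrict (Set.Ioo 0 1) (Set.Ici x) = ENNReal.ofReal (1 - x) := by
  rw [Measure.restrict_apply measurableSet_Ici,
    show Set.Ici x ∩ Set.Ioo 0 1 = Set.Ico x 1 by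
      ext y; constructor
      · rintro ⟨hxy, -, hy1⟩; exact ⟨hxy, hy1⟩
      · rintro ⟨hxy, hy1⟩; exact ⟨hxy, hx.1.trans_le hxy, hy1⟩,
    Real.volume_Ico]

lemma lintegral_scaledBetaMeasure_tail_pow {C a b : ℝ} (hC : 0 ≤ C) (ha : 0 < a) (hb : 0 < b)
    (n : ℕ) :
    ∫⁻ x, volume.restrict (Set.Ioo 0 1) (Set.Ici x) ^ n ∂scaledBetaMeasure C a b
      = ENNReal.ofReal (C * beta a (b + n)) := by
  have htail : Measurable fun x : ℝ => volume.restrict (Set.Ioo 0 1) (Set.Ici x) ^ n :=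
    (Antitone.measurable fun x y hxy => measure_mono (Set.Ici_subset_Ici.2 hxy)).pow_const n
  rw [scaledBetaMeasure, lintegral_withDensity_eq_lintegral_mul _ (by fun_prop) htail,
    ENNReal.ofReal_mul hC, ← lintegral_Ioo_rpow_mul_one_sub_rpow ha (by positivity),
    ← lintegral_const_mul' _ _ ENNReal.ofReal_ne_top]
  refine setLIntegral_congr_fun measurableSet_Ioo fun x hx => ?_
  have hx1 : 0 < 1 - x := by linarith [hx.2]
  rw [Pi.mul_apply, volume_restrict_Ioo_Ici hx, ← ENNReal.ofReal_pow hx1.le,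
    ← ENNReal.ofReal_mul (by have := hx.1; positivity), ← ENNReal.ofReal_mul hC,
    ← Real.rpow_natCast, show b + n - 1 = (b - 1) + n by ring, Real.rpow_add hx1]
  ring_nf

lemma lintegral_scaledBetaMeasure_tail_pow_of_isProbabilityMeasure {C a b : ℝ} (hC : 0 ≤ C)
    (ha : 0 < a) (hb : 0 < b) [IsProbabilityMeasure (scaledBetaMeasure C a b)] (n : ℕ) :
    ∫⁻ x, volume.restrict (Set.Ioo 0 1) (Set.Ici x) ^ n ∂scaledBetaMeasure C a b
      = ENNReal.ofReal ((ascPochhammer ℝ n).eval b / (ascPochhammer ℝ n).eval (a + b)) := by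
  have hnorm : C * beta a b = 1 := by
    have h := lintegral_scaledBetaMeasure_tail_pow hC ha hb 0
    simp only [pow_zero, lintegral_one, measure_univ, Nat.cast_zero, add_zero] at h
    exact ENNReal.ofReal_eq_one.1 h.symm
  have hP := ascPochhammer_pos n _ (add_pos ha hb)
  rw [lintegral_scaledBetaMeasure_tail_pow hC ha hb]
  refine congrArg _ (eq_div_of_mul_eq hP.ne' ?_)
  rw [mul_assoc, beta_add_nat_mul_ascPochhammer ha hb, ← mul_assoc, hnorm, one_mul]

section Sampling

variable {Ω ι : Type*} [MeasurableSpace Ω] {μ : Measure Ω} {U : ι → Ω → ℝ} {ν : Measure ℝ}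

lemma ProbabilityTheory.iIndepFun.measure_forall_le {x : ℝ} (hUind : iIndepFun U μ)
    (hU : ∀ j, Measurable (U j)) (hUlaw : ∀ j, μ.map (U j) = ν) (s : Finset ι) :
    μ {ω | ∀ j ∈ s, x ≤ U j ω} = ν (Set.Ici x) ^ s.card := by
  have hpre : {ω | ∀ j ∈ s, x ≤ U j ω} = ⋂ j ∈ s, U j ⁻¹' Set.Ici x := by ext; simp
  rw [hpre, hUind.meas_biInter fun j _ => ⟨Set.Ici x, measurableSet_Ici, rfl⟩,
    Finset.prod_congr rfl fun j _ => (hUlaw j ▸ Measure.map_apply (hU j) measurableSet_Ici).symm,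
    Finset.prod_const]

-- Fubini over the joint law of `V` and `(U j)`, which is a product measure by independence.
lemma measure_forall_le_eq_lintegral [IsFiniteMeasure μ] {V : Ω → ℝ} (hV : Measurable V)
    (hU : ∀ j, Measurable (U j)) (hVU : IndepFun V (fun ω j => U j ω) μ)
    (hUind : iIndepFun U μ) (hUlaw : ∀ j, μ.map (U j) = ν) (s : Finset ι) :
    μ {ω | ∀ j ∈ s, V ω ≤ U j ω} = ∫⁻ x, ν (Set.Ici x) ^ s.card ∂μ.map V := by
  have hUvec : Measurable fun ω j => U j ω := measurable_pi_lambda _ hU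
  set A : Set (ℝ × (ι → ℝ)) := {p | ∀ j ∈ s, p.1 ≤ p.2 j}
  have hA : MeasurableSet A := by
    simp only [A, Set.ofPred_forall]
    exact Finset.measurableSet_biInter s fun j _ =>
      measurableSet_le measurable_fst ((measurable_pi_apply j).comp measurable_snd)
  have hsection (x : ℝ) :
      μ.map (fun ω j => U j ω) (Prod.mk x ⁻¹' A) = ν (Set.Ici x) ^ s.card := by
    rw [Measure.map_apply hUvec (measurable_prodMk_left hA)]
    exact hUind.measure_forall_le hU hUlaw s
  change μ ((fun ω => (V ω, fun j => U j ω)) ⁻¹' A) = _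
  rw [← Measure.map_apply (hV.prodMk hUvec) hA,
    (indepFun_iff_map_prod_eq_prod_map_map hV.aemeasurable hUvec.aemeasurable).1 hVU,
    Measure.prod_apply hA]
  simp only [hsection]

end Sampling

lemma sampleX_eq_one_iff (H : ℕ → ℝ) (u : ℝ) : sampleX H u = 1 ↔ u < H 1 := by
  have hone : 1 ∈ {i : ℕ | 1 ≤ i ∧ u < ∑ m ∈ Finset.Icc 1 i, stickP H m} ↔ u < H 1 := by
    simp [stickP]
  rw [sampleX, ← hone]
  constructor
  · intro h
    have hmem := Nat.sInf_mem (Nat.nonempty_of_sInf_eq_succ h)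
    rwa [h] at hmem
  · intro h
    exact le_antisymm (Nat.sInf_le h) (Nat.sInf_mem ⟨1, h⟩).1

theorem stmt_8_general {Ω : Type} [MeasurableSpace Ω] (μ : Measure Ω) [IsProbabilityMeasure μ]
    (α θ : ℝ) (hα1 : α < 1) (hθ : -α < θ)
    (H U : ℕ → Ω → ℝ) (hGEM : IsGEM μ α θ H U)
    (n : ℕ) :
    (μ {ω | ∀ j ∈ Finset.Icc 1 n, sampleX (fun i => H i ω) (U j ω) ≠ 1}).toReal
      = (ascPochhammer ℝ n).eval (α + θ) / (ascPochhammer ℝ n).eval (1 + θ) := by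
  obtain ⟨hHm, hUm, -, hUind, hHU, hHlaw, hUlaw⟩ := hGEM
  obtain ⟨C, hC, hH1⟩ := hHlaw 1 le_rfl
  have hH1 : μ.map (H 1) = scaledBetaMeasure C (1 - α) (θ + α) := by
    rw [hH1, scaledBetaMeasure]
    congr! 6 <;> push_cast <;> ring
  have hevent : {ω | ∀ j ∈ Finset.Icc 1 n, sampleX (fun i => H i ω) (U j ω) ≠ 1}
      = {ω | ∀ j ∈ Finset.Icc 1 n, H 1 ω ≤ U j ω} := by
    simp only [ne_eq, sampleX_eq_one_iff, not_lt]
  have : IsProbabilityMeasure (scaledBetaMeasure C (1 - α) (θ + α)) :=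
    hH1 ▸ Measure.isProbabilityMeasure_map (hHm 1).aemeasurable
  have ha : 0 < 1 - α := by linarith
  have hb : 0 < θ + α := by linarith
  rw [show α + θ = θ + α by ring, show 1 + θ = (1 - α) + (θ + α) by ring, hevent,
    measure_forall_le_eq_lintegral (hHm 1) hUm (hHU.comp (measurable_pi_apply 1) measurable_id)
      hUind hUlaw, Nat.card_Icc, Nat.add_sub_cancel, hH1,
    lintegral_scaledBetaMeasure_tail_pow_of_isProbabilityMeasure hC.le ha hb,
    ENNReal.toReal_ofReal (div_nonneg (ascPochhammer_pos n _ hb).le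
      (ascPochhammer_pos n _ (add_pos ha hb)).le)]

theorem stmt_8 {Ω : Type} [MeasurableSpace Ω] (μ : Measure Ω) [IsProbabilityMeasure μ]
    (α θ : ℝ) (hα0 : 0 ≤ α) (hα1 : α < 1) (hθ : -α < θ)
    (H U : ℕ → Ω → ℝ) (hGEM : IsGEM μ α θ H U)
    (n : ℕ) (hn : 1 ≤ n) :
    (μ {ω | ∀ j ∈ Finset.Icc 1 n, sampleX (fun i => H i ω) (U j ω) ≠ 1}).toReal
      = (ascPochhammer ℝ n).eval (α + θ) / (ascPochhammer ℝ n).eval (1 + θ) :=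
  stmt_8_general μ α θ hα1 hθ H U hGEM n
end
end

section
/- For every n ≥ 1 and every composition (n_1,…,n_k) of n, the number of set partitions of {1,…,n} into k blocks B_1,…,B_k satisfying min B_1 < min B_2 < ⋯ < min B_k and #B_i = n_i for all i equals n! · ∏_{i=1}^{k} 1 / ( (n_i − 1)! · (n_i + n_{i+1} + ⋯ + n_k) ). Equivalently, this count equals the multinomial coefficient n!/(n_1!⋯n_k!) multiplied by ∏_{i=1}^{k} n_i/(n_i+⋯+n_k), and in particular the latter expression is a positive integer. -/
/-!
In an ordered partition of a finite linearly ordered set `s`, the first block is the one containing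
`min s`. Removing it leaves an ordered partition of the remaining `#s - n₁` elements, and the first
block can be any `n₁`-subset containing `min s`, so the count satisfies
`N(n₁, …, n_k) = C(n - 1, n₁ - 1) · N(n₂, …, n_k)`. Unfolding this recursion gives
`N · ∏ᵢ (nᵢ - 1)! (nᵢ + ⋯ + n_k) = n!`.
-/

open Finset Function

variable {α : Type*} [LinearOrder α]

def IsOrderedPartition {k : ℕ} (s : Finset α) (c : Fin k → ℕ) (B : Fin k → Finset α) :
    Prop :=
  (∀ i, (B i).Nonempty) ∧ Pairwise (Disjoint on B) ∧ univ.biUnion B = s ∧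
    StrictMono (fun i => (B i).min) ∧ ∀ i, (B i).card = c i

theorem biUnion_univ_fin_cons {k : ℕ} (A : Finset α) (B : Fin k → Finset α) :
    univ.biUnion (Fin.cons A B : Fin (k + 1) → Finset α) = A ∪ univ.biUnion B := by
  ext x; simp [Fin.exists_fin_succ]

theorem isOrderedPartition_cons_iff {k : ℕ} {s : Finset α} (hs : s.Nonempty)
    {c : Fin (k + 1) → ℕ} {A : Finset α} {B : Fin k → Finset α} :
    IsOrderedPartition s c (Fin.cons A B) ↔
      (A ⊆ s ∧ s.min' hs ∈ A ∧ A.card = c 0) ∧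
        IsOrderedPartition (s \ A) (Fin.tail c) B := by
  have hmin : (fun i => ((Fin.cons A B : Fin (k + 1) → Finset α) i).min) =
      Fin.cons (α := fun _ => WithTop α) A.min (fun i => (B i).min) :=
    Fin.comp_cons Finset.min A B
  simp only [IsOrderedPartition, Fin.forall_fin_succ, Fin.cons_zero, Fin.cons_succ,
    pairwise_fin_succ_iff, onFun, biUnion_univ_fin_cons, hmin, Fin.strictMono_cons, Fin.tail]
  constructor
  · rintro ⟨⟨-, hBne⟩, ⟨-, hAB, hBB⟩, hunion, ⟨hAB_min, hmono⟩, hcA, hcB⟩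
    have hAs : A ⊆ s := hunion ▸ subset_union_left
    refine ⟨⟨hAs, ?_, hcA⟩, hBne, hBB, ?_, hmono, hcB⟩
    · have hm : s.min' hs ∈ A ∪ univ.biUnion B := hunion.symm ▸ min'_mem s hs
      obtain hm | ⟨j, -, hj⟩ := mem_union.1 hm |>.imp id mem_biUnion.1
      · exact hm
      · exact absurd (hAB_min j)
          (not_lt.2 ((min_le hj).trans ((coe_min' hs).trans_le (min_mono hAs))))
    · rw [← hunion, union_sdiff_cancel_left ((disjoint_biUnion_right _ _ _).2 fun j _ => hAB j)]
  · rintro ⟨⟨hAs, hmA, hcA⟩, hBne, hBB, hunion, hmono, hcB⟩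
    have hBsub : ∀ j, B j ⊆ s \ A := fun j => hunion ▸ subset_biUnion_of_mem B (mem_univ j)
    have hAB : ∀ j, Disjoint A (B j) := fun j => disjoint_of_subset_right (hBsub j) disjoint_sdiff
    refine ⟨⟨⟨_, hmA⟩, hBne⟩, ⟨fun j => (hAB j).symm, hAB, hBB⟩, ?_, ⟨fun j => ?_, hmono⟩,
      hcA, hcB⟩
    · rw [hunion, union_sdiff_of_subset hAs]
    · obtain ⟨hxs, hxA⟩ := mem_sdiff.1 (hBsub j (min'_mem _ (hBne j)))
      calc A.min ≤ ↑(s.min' hs) := min_le hmA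
        _ < ↑((B j).min' (hBne j)) :=
          WithTop.coe_lt_coe.2 ((min'_le _ _ hxs).lt_of_ne fun h => hxA (h ▸ hmA))
        _ = (B j).min := coe_min' _

theorem card_isOrderedPartition_succ [Finite α] {k : ℕ} {s : Finset α} (hs : s.Nonempty)
    (c : Fin (k + 1) → ℕ) :
    Nat.card {B // IsOrderedPartition s c B} =
      ∑ A ∈ (s.powersetCard (c 0)).filter ({s.min' hs} ⊆ ·),
        Nat.card {B // IsOrderedPartition (s \ A) (Fin.tail c) B} := by
  have hmem {A : Finset α} : A ∈ (s.powersetCard (c 0)).filter ({s.min' hs} ⊆ ·) ↔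
      A ⊆ s ∧ s.min' hs ∈ A ∧ A.card = c 0 := by
    simp only [mem_filter, mem_powersetCard, singleton_subset_iff]; tauto
  have hsplit (B : Fin (k + 1) → Finset α) (hB : IsOrderedPartition s c B) :=
    (isOrderedPartition_cons_iff hs).1 ((Fin.cons_self_tail B).symm ▸ hB)
  rw [← sum_coe_sort, ← Nat.card_sigma]
  refine Nat.card_congr
    { toFun := fun B => ⟨⟨B.1 0, ?_⟩, Fin.tail B.1, ?_⟩
      invFun := fun AB => ⟨Fin.cons AB.1.1 AB.2.1, ?_⟩
      left_inv := fun B => Subtype.ext (Fin.cons_self_tail B.1)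
      right_inv := fun AB => rfl }
  · exact hmem.2 (hsplit B.1 B.2).1
  · exact (hsplit B.1 B.2).2
  · exact (isOrderedPartition_cons_iff hs).2 ⟨hmem.1 AB.1.2, AB.2.2⟩

theorem card_isOrderedPartition_fin_zero (c : Fin 0 → ℕ) :
    Nat.card {B // IsOrderedPartition (∅ : Finset α) c B} = 1 :=
  Nat.card_eq_one_iff_exists.2
    ⟨⟨finZeroElim, finZeroElim, fun i => i.elim0, by simp, fun i => i.elim0, finZeroElim⟩,
      fun B => Subtype.ext (funext finZeroElim)⟩

open Nat in
theorem card_isOrderedPartition_mul_prod [Finite α] {k : ℕ} (c : Fin k → ℕ)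
    (hc : ∀ i, 0 < c i) (s : Finset α) (hs : s.card = ∑ i, c i) :
    Nat.card {B // IsOrderedPartition s c B} * ∏ i, ((c i - 1)! * ∑ j ∈ Ici i, c j) =
      s.card ! := by
  induction k generalizing s with
  | zero =>
    obtain rfl : s = ∅ := by simpa using hs
    simp [card_isOrderedPartition_fin_zero]
  | succ k ih =>
    set n := s.card
    have hn : n = c 0 + ∑ i, Fin.tail c i := by rw [hs, Fin.sum_univ_succ]; rfl
    have hc0 : 0 < c 0 := hc 0
    have hs0 : s.Nonempty := card_pos.1 (by omega)
    set F := (s.powersetCard (c 0)).filter ({s.min' hs0} ⊆ ·)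
    have hfiber : ∀ A ∈ F, Nat.card {B // IsOrderedPartition (s \ A) (Fin.tail c) B} *
        ∏ i : Fin k, ((c i.succ - 1)! * ∑ j ∈ Ici i.succ, c j) = (n - c 0)! := by
      intro A hA
      obtain ⟨hAs, hcA⟩ := mem_powersetCard.1 (mem_filter.1 hA).1
      have hcard : (s \ A).card = n - c 0 := by rw [card_sdiff_of_subset hAs, hcA]
      simpa [Fin.tail, Fin.sum_Ici_succ, hcard] using
        ih (Fin.tail c) (fun i => hc i.succ) (s \ A) (by omega)
    have hF : F.card = (n - 1).choose (c 0 - 1) :=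
      card_filter_powersetCard_subset _ _ _ (singleton_subset_iff.2 (min'_mem s hs0))
        ((card_singleton _).trans_le hc0)
    rw [card_isOrderedPartition_succ hs0, Fin.prod_univ_succ,
      show Ici (0 : Fin (k + 1)) = univ from Ici_bot, ← hs, mul_comm ((c 0 - 1)! * n),
      ← mul_assoc, sum_mul, sum_congr rfl hfiber, sum_const, smul_eq_mul, hF]
    calc (n - 1).choose (c 0 - 1) * (n - c 0)! * ((c 0 - 1)! * n)
        = (n - 1).choose (c 0 - 1) * (c 0 - 1)! * (n - 1 - (c 0 - 1))! * n := by
          rw [show n - 1 - (c 0 - 1) = n - c 0 by omega]; ring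
      _ = n ! := by
          rw [choose_mul_factorial_mul_factorial (by omega), mul_comm,
            mul_factorial_pred (by omega)]

open Nat in
theorem cast_div_div_factorial {m : ℕ} (hm : 0 < m) (S : ℝ) :
    (m : ℝ) / S / m ! = 1 / ((m - 1)! * S) := by
  have hm' : (m : ℝ) ≠ 0 := by exact_mod_cast hm.ne'
  rw [← mul_factorial_pred hm.ne', cast_mul]
  field_simp

theorem stmt_14_general (n k : ℕ)
    (c : Fin k → ℕ) (hc : ∀ i, 0 < c i) (hsum : ∑ i, c i = n) :
    -- the number of set partitions of {1,…,n} into k blocks B_1,…,B_k listed in order of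
    -- appearance (increasing least elements) with #B_i = c i
    ((Nat.card {B : Fin k → Finset (Fin n) //
        (∀ i, (B i).Nonempty) ∧ (∀ i i', i ≠ i' → Disjoint (B i) (B i')) ∧
        Finset.univ.biUnion B = Finset.univ ∧
        (StrictMono fun i => (B i).min) ∧ ∀ i, (B i).card = c i} : ℝ)
        = (Nat.factorial n : ℝ)
          * ∏ i : Fin k,
              1 / ((Nat.factorial (c i - 1) : ℝ) * ∑ j ∈ Finset.Ici i, (c j : ℝ)))
    ∧ ((Nat.card {B : Fin k → Finset (Fin n) //
        (∀ i, (B i).Nonempty) ∧ (∀ i i', i ≠ i' → Disjoint (B i) (B i')) ∧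
        Finset.univ.biUnion B = Finset.univ ∧
        (StrictMono fun i => (B i).min) ∧ ∀ i, (B i).card = c i} : ℝ)
        = ((Nat.factorial n : ℝ) / ∏ i : Fin k, (Nat.factorial (c i) : ℝ))
          * ∏ i : Fin k, (c i : ℝ) / ∑ j ∈ Finset.Ici i, (c j : ℝ))
    ∧ 0 < Nat.card {B : Fin k → Finset (Fin n) //
        (∀ i, (B i).Nonempty) ∧ (∀ i i', i ≠ i' → Disjoint (B i) (B i')) ∧
        Finset.univ.biUnion B = Finset.univ ∧
        (StrictMono fun i => (B i).min) ∧ ∀ i, (B i).card = c i} := by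
  have hcount := card_isOrderedPartition_mul_prod c hc (univ : Finset (Fin n)) (by simp [hsum])
  set N := Nat.card {B // IsOrderedPartition (univ : Finset (Fin n)) c B}
  rw [card_univ, Fintype.card_fin] at hcount
  show (N : ℝ) = _ ∧ (N : ℝ) = _ ∧ 0 < N
  have hS (i : Fin k) : (0 : ℝ) < ∑ j ∈ Ici i, (c j : ℝ) := by
    exact_mod_cast (hc i).trans_le (single_le_sum (fun j _ => Nat.zero_le _) (mem_Ici.2 le_rfl))
  have hP : (∏ i, ((c i - 1).factorial * ∑ j ∈ Ici i, (c j : ℝ))) ≠ 0 :=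
    prod_ne_zero_iff.2 fun i _ => mul_ne_zero (by positivity) (hS i).ne'
  have hcount' :
      (N : ℝ) * ∏ i, ((c i - 1).factorial * ∑ j ∈ Ici i, (c j : ℝ)) = n.factorial := by
    exact_mod_cast hcount
  have hformula :
      (N : ℝ) = n.factorial * ∏ i, 1 / ((c i - 1).factorial * ∑ j ∈ Ici i, (c j : ℝ)) := by
    rw [← hcount', prod_div_distrib, prod_const_one, mul_one_div, mul_div_cancel_right₀ _ hP]
  refine ⟨hformula, ?_,
    Nat.pos_of_ne_zero fun h => n.factorial_ne_zero (by rw [← hcount, h, zero_mul])⟩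
  rw [hformula, div_mul_eq_mul_div, mul_div_assoc, ← prod_div_distrib]
  exact congrArg _ (prod_congr rfl fun i _ => (cast_div_div_factorial (hc i) _).symm)

theorem stmt_14 (n k : ℕ) (hn : 1 ≤ n) (hk : 1 ≤ k)
    (c : Fin k → ℕ) (hc : ∀ i, 0 < c i) (hsum : ∑ i, c i = n) :
    -- the number of set partitions of {1,…,n} into k blocks B_1,…,B_k listed in order of
    -- appearance (increasing least elements) with #B_i = c i
    ((Nat.card {B : Fin k → Finset (Fin n) //
        (∀ i, (B i).Nonempty) ∧ (∀ i i', i ≠ i' → Disjoint (B i) (B i')) ∧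
        Finset.univ.biUnion B = Finset.univ ∧
        (StrictMono fun i => (B i).min) ∧ ∀ i, (B i).card = c i} : ℝ)
        = (Nat.factorial n : ℝ)
          * ∏ i : Fin k,
              1 / ((Nat.factorial (c i - 1) : ℝ) * ∑ j ∈ Finset.Ici i, (c j : ℝ)))
    ∧ ((Nat.card {B : Fin k → Finset (Fin n) //
        (∀ i, (B i).Nonempty) ∧ (∀ i i', i ≠ i' → Disjoint (B i) (B i')) ∧
        Finset.univ.biUnion B = Finset.univ ∧
        (StrictMono fun i => (B i).min) ∧ ∀ i, (B i).card = c i} : ℝ)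
        = ((Nat.factorial n : ℝ) / ∏ i : Fin k, (Nat.factorial (c i) : ℝ))
          * ∏ i : Fin k, (c i : ℝ) / ∑ j ∈ Finset.Ici i, (c j : ℝ))
    ∧ 0 < Nat.card {B : Fin k → Finset (Fin n) //
        (∀ i, (B i).Nonempty) ∧ (∀ i i', i ≠ i' → Disjoint (B i) (B i')) ∧
        Finset.univ.biUnion B = Finset.univ ∧
        (StrictMono fun i => (B i).min) ∧ ∀ i, (B i).card = c i} :=
  stmt_14_general n k c hc hsum
end

section
/- Fix α ∈ [0,1) and strictly positive reals V_{k:n} (1 ≤ k ≤ n < ∞) satisfying the consistency relation V_{k:n} = (n−kα)·V_{k:n+1} + V_{k+1:n+1} for all 1 ≤ k ≤ n. For a composition (n_1,…,n_k) of n define p̃(n_1,…,n_k) = V_{k:n} · ( ∏_{i=1}^{k}(1−α)_{n_i−1} ) · ∏_{i=1}^{k} (n_i−α)/((n_i+n_{i+1}+⋯+n_k)−(k−i+1)α). Then for every composition (n_1,…,n_k) of n: p̃(n_1,…,n_k) = ∑_{j=1}^{k+1} p̃(n_1,…,n_{j−1},1,n_j,…,n_k) + ∑_{j=1}^{k} p̃(n_1,…,n_{j−1},n_j+1,n_{j+1},…,n_k).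 In particular, the value-ordered transition probabilities of the ordered Chinese restaurant process for a Gibbs(α) model sum to one. -/
/-!
Write `tpFun α V L = V_{k:n} · w(L)`. The weight `w` satisfies the recursion
`w(a :: T) = (1 - α)_{a-1} · (a - α) / D(a :: T) · w(T)` with `D(L) = ∑ (n_i - α)`, because the
denominators of `tpFun` are `D` of the tails of `L`. Peeling off the first part, an induction on
`L` gives `∑_j w(insert 1 at j) = w(L)` (inserting in front contributes `(1 - α) / (D + 1 - α)`,
inserting later `D / (D + 1 - α)`) and `∑_j w(increase part j) = D(L) · w(L)`. Since
`D(L) = n - kα`, the consistency relation `V_{k:n} = (n - kα) V_{k:n+1} + V_{k+1:n+1}` combines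
the two sums into `V_{k:n} · w(L)`.
-/

noncomputable section

/-- The value-ordered composition probability function of a Gibbs(α) model:
`tpFun α V (n_1,…,n_k) = V_{k:n} · ∏ (1−α)_{n_i−1} · ∏ (n_i−α)/((n_i+⋯+n_k)−(k−i+1)α)`. -/
def tpFun (α : ℝ) (V : ℕ → ℕ → ℝ) (L : List ℕ) : ℝ :=
  V L.length L.sum
    * (∏ i ∈ Finset.range L.length, (ascPochhammer ℝ (L.getD i 0 - 1)).eval (1 - α))
    * ∏ i ∈ Finset.range L.length,
        ((L.getD i 0 : ℝ) - α)
          / (((L.drop i).sum : ℝ) - ((L.length - i : ℕ) : ℝ) * α)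

def offsetSum (α : ℝ) (L : List ℕ) : ℝ := L.sum - L.length * α

@[simp]
lemma offsetSum_nil (α : ℝ) : offsetSum α [] = 0 := by simp [offsetSum]

lemma offsetSum_cons (α : ℝ) (a : ℕ) (L : List ℕ) :
    offsetSum α (a :: L) = (a - α) + offsetSum α L := by
  simp only [offsetSum, List.sum_cons, List.length_cons]; push_cast; ring

lemma offsetSum_nonneg {α : ℝ} (hα : α < 1) {L : List ℕ} (hL : ∀ x ∈ L, 0 < x) :
    0 ≤ offsetSum α L := by
  induction L with
  | nil => simp
  | cons a L ih =>
    rw [offsetSum_cons]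
    have : (1 : ℝ) ≤ a := by exact_mod_cast hL a List.mem_cons_self
    have := ih fun x hx => hL x (List.mem_cons_of_mem a hx)
    linarith

lemma offsetSum_cons_pos {α : ℝ} (hα : α < 1) {a : ℕ} {L : List ℕ} (hL : ∀ x ∈ a :: L, 0 < x) :
    0 < offsetSum α (a :: L) := by
  rw [offsetSum_cons]
  have : (1 : ℝ) ≤ a := by exact_mod_cast hL a List.mem_cons_self
  have := offsetSum_nonneg hα fun x hx => hL x (List.mem_cons_of_mem a hx)
  linarith

lemma offsetSum_insertIdx_one (α : ℝ) {L : List ℕ} {j : ℕ} (hj : j ≤ L.length) :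
    offsetSum α (L.insertIdx j 1) = offsetSum α L + (1 - α) := by
  simp only [offsetSum, List.CommMonoid.sum_insertIdx hj, List.length_insertIdx_of_le_length hj]
  push_cast; ring

lemma List.sum_set_getD_add {M : Type*} [AddCommMonoid M] (b : M) :
    ∀ {L : List M} {j : ℕ}, j < L.length → (L.set j (L.getD j 0 + b)).sum = L.sum + b
  | a :: L, 0, _ => by simp [add_assoc, add_comm b]
  | a :: L, j + 1, h => by
    rw [List.set_cons_succ, List.getD_cons_succ, List.sum_cons, List.sum_cons,
      List.sum_set_getD_add b (by simpa using h), add_assoc]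

lemma offsetSum_set_getD_add_one (α : ℝ) {L : List ℕ} {j : ℕ} (hj : j < L.length) :
    offsetSum α (L.set j (L.getD j 0 + 1)) = offsetSum α L + 1 := by
  simp only [offsetSum, List.sum_set_getD_add 1 hj, List.length_set]
  push_cast; ring

def compositionWeight (α : ℝ) : List ℕ → ℝ
  | [] => 1
  | a :: L => (ascPochhammer ℝ (a - 1)).eval (1 - α) * ((a - α) / offsetSum α (a :: L))
      * compositionWeight α L

lemma tpFun_eq_mul_compositionWeight (α : ℝ) (V : ℕ → ℕ → ℝ) (L : List ℕ) :
    tpFun α V L = V L.length L.sum * compositionWeight α L := by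
  rw [tpFun, mul_assoc]
  congr 1
  induction L with
  | nil => simp [compositionWeight]
  | cons a L ih =>
    rw [compositionWeight, ← ih, List.length_cons, Finset.prod_range_succ',
      Finset.prod_range_succ']
    simp only [List.getD_cons_succ, List.getD_cons_zero, List.drop_succ_cons, List.drop_zero,
      Nat.add_sub_add_right, Nat.sub_zero, List.length_cons, offsetSum]
    push_cast
    ring

lemma sum_compositionWeight_insertIdx_one {α : ℝ} (hα : α < 1) :
    ∀ {L : List ℕ}, (∀ x ∈ L, 0 < x) →
      ∑ j ∈ Finset.range (L.length + 1), compositionWeight α (L.insertIdx j 1)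
        = compositionWeight α L
  | [], _ => by
    have : (1 : ℝ) - α ≠ 0 := by linarith
    simp [compositionWeight, offsetSum_cons, this]
  | a :: L, hL => by
    have hL' : ∀ x ∈ L, 0 < x := fun x hx => hL x (List.mem_cons_of_mem a hx)
    have hD := offsetSum_cons_pos hα hL
    have hD' : offsetSum α (a :: L) + (1 - α) ≠ 0 := by linarith
    have hshift : ∀ j ∈ Finset.range (L.length + 1),
        compositionWeight α ((a :: L).insertIdx (j + 1) 1)
          = (ascPochhammer ℝ (a - 1)).eval (1 - α)
              * ((a - α) / (offsetSum α (a :: L) + (1 - α)))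
              * compositionWeight α (L.insertIdx j 1) := by
      intro j hj
      rw [List.insertIdx_succ_cons, compositionWeight, offsetSum_cons,
        offsetSum_insertIdx_one α (Nat.lt_succ_iff.mp (Finset.mem_range.mp hj)), offsetSum_cons]
      ring
    rw [List.length_cons, Finset.sum_range_succ', Finset.sum_congr rfl hshift, ← Finset.mul_sum,
      sum_compositionWeight_insertIdx_one hα hL', List.insertIdx_zero]
    simp only [compositionWeight, offsetSum_cons (a := 1), Nat.sub_self, ascPochhammer_zero,
      Polynomial.eval_one, Nat.cast_one]
    rw [add_comm (1 - α)]
    field_simp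

lemma sum_compositionWeight_set_getD_add_one {α : ℝ} (hα : α < 1) :
    ∀ {L : List ℕ}, (∀ x ∈ L, 0 < x) →
      ∑ j ∈ Finset.range L.length, compositionWeight α (L.set j (L.getD j 0 + 1))
        = offsetSum α L * compositionWeight α L
  | [], _ => by simp
  | a :: L, hL => by
    have hL' : ∀ x ∈ L, 0 < x := fun x hx => hL x (List.mem_cons_of_mem a hx)
    have hD := offsetSum_cons_pos hα hL
    obtain ⟨b, rfl⟩ : ∃ b, a = b + 1 := Nat.exists_eq_add_one.mpr (hL a List.mem_cons_self)
    have hshift : ∀ j ∈ Finset.range L.length,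
        compositionWeight α (((b + 1) :: L).set (j + 1) (((b + 1) :: L).getD (j + 1) 0 + 1))
          = (ascPochhammer ℝ b).eval (1 - α)
              * ((b + 1 - α) / (offsetSum α ((b + 1) :: L) + 1))
              * compositionWeight α (L.set j (L.getD j 0 + 1)) := by
      intro j hj
      rw [List.set_cons_succ, List.getD_cons_succ, compositionWeight, offsetSum_cons,
        offsetSum_set_getD_add_one α (Finset.mem_range.mp hj), offsetSum_cons]
      push_cast
      ring
    rw [List.length_cons, Finset.sum_range_succ', Finset.sum_congr rfl hshift, ← Finset.mul_sum,
      sum_compositionWeight_set_getD_add_one hα hL', List.set_cons_zero, List.getD_cons_zero]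
    simp only [compositionWeight, Nat.add_sub_cancel, ascPochhammer_succ_eval]
    have hD₂ : offsetSum α ((b + 1 + 1) :: L) = offsetSum α ((b + 1) :: L) + 1 := by
      simp only [offsetSum_cons]; push_cast; ring
    have hDL : offsetSum α L = offsetSum α ((b + 1) :: L) - (b + 1 - α) := by
      rw [offsetSum_cons]; push_cast; ring
    rw [hD₂, hDL]
    push_cast
    field_simp
    ring

theorem stmt_15_general (α : ℝ) (hα1 : α < 1)
    (V : ℕ → ℕ → ℝ)
    (hcons : ∀ k n, 1 ≤ k → k ≤ n →
      V k n = ((n : ℝ) - (k : ℝ) * α) * V k (n + 1) + V (k + 1) (n + 1))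
    (n : ℕ) (hn : 1 ≤ n) (L : List ℕ) (hL : ∀ x ∈ L, 0 < x) (hsum : L.sum = n) :
    tpFun α V L
      = (∑ j ∈ Finset.range (L.length + 1), tpFun α V (L.insertIdx j 1))
        + ∑ j ∈ Finset.range L.length, tpFun α V (L.set j (L.getD j 0 + 1)) := by
  subst hsum
  have hk : 1 ≤ L.length := List.length_pos_iff.mpr (by rintro rfl; simp at hn)
  have hkn : L.length ≤ L.sum := List.length_le_sum_of_one_le L hL
  have hins : ∀ j ∈ Finset.range (L.length + 1), tpFun α V (L.insertIdx j 1)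
      = V (L.length + 1) (L.sum + 1) * compositionWeight α (L.insertIdx j 1) := fun j hj => by
    have hj : j ≤ L.length := Nat.lt_succ_iff.mp (Finset.mem_range.mp hj)
    rw [tpFun_eq_mul_compositionWeight, List.length_insertIdx_of_le_length hj,
      List.CommMonoid.sum_insertIdx hj, add_comm 1]
  have hset : ∀ j ∈ Finset.range L.length, tpFun α V (L.set j (L.getD j 0 + 1))
      = V L.length (L.sum + 1) * compositionWeight α (L.set j (L.getD j 0 + 1)) := fun j hj => by
    rw [tpFun_eq_mul_compositionWeight, List.length_set,
      List.sum_set_getD_add 1 (Finset.mem_range.mp hj)]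
  rw [Finset.sum_congr rfl hins, Finset.sum_congr rfl hset, ← Finset.mul_sum, ← Finset.mul_sum,
    sum_compositionWeight_insertIdx_one hα1 hL, sum_compositionWeight_set_getD_add_one hα1 hL,
    tpFun_eq_mul_compositionWeight, hcons _ _ hk hkn, offsetSum]
  ring

theorem stmt_15 (α : ℝ) (hα0 : 0 ≤ α) (hα1 : α < 1)
    (V : ℕ → ℕ → ℝ) (hV : ∀ k n, 1 ≤ k → k ≤ n → 0 < V k n)
    (hcons : ∀ k n, 1 ≤ k → k ≤ n →
      V k n = ((n : ℝ) - (k : ℝ) * α) * V k (n + 1) + V (k + 1) (n + 1))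
    (n : ℕ) (hn : 1 ≤ n) (L : List ℕ) (hL : ∀ x ∈ L, 0 < x) (hsum : L.sum = n) :
    tpFun α V L
      = (∑ j ∈ Finset.range (L.length + 1), tpFun α V (L.insertIdx j 1))
        + ∑ j ∈ Finset.range L.length, tpFun α V (L.set j (L.getD j 0 + 1)) :=
  stmt_15_general α hα1 V hcons n hn L hL hsum
end
end
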